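/- arXiv:1505.07525 — 5 statements merged into one kernel-verified Lean document; each statement's English description precedes it below -/
import Mathlib

section
/- Let α₀ ∈ (0,1) and let H : [0,∞) → [0,∞) be convex, increasing, with H(0) = 0. Define H₁(s) = α₀ · s^{1 − 1/α₀} · H(s^{1/α₀}) and assume H₁ is convex on [0,∞) with H₁(0) = 0. Fix t > 0, let g : [0,t] → (0,∞) be continuous, let f : [0,t] → ℝ be continuous, and set c = ∫₀ᵗ g(t−s)^{1−α₀} f(s)² ds, assumed to satisfy 0 < c < ∞. Then for every ϑ > 0 with ϑ·c ≤ 1, one has H₁( ϑ ∫₀ᵗ g(t−s) f(s)² ds ) ≤ α₀ · ϑ · ∫₀ᵗ H(g(t−s)) f(s)² ds. -/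
open intervalIntegral MeasureTheory Set

/-- Jensen-type estimate. With H convex increasing, H(0)=0, and
H₁(s) = α₀ s^{1-1/α₀} H(s^{1/α₀}) convex with H₁(0)=0, for
c = ∫₀ᵗ g(t-s)^{1-α₀} f(s)² ds ∈ (0,∞) and any ϑ > 0 with ϑ·c ≤ 1 one has
H₁(ϑ ∫₀ᵗ g(t-s) f(s)² ds) ≤ α₀ ϑ ∫₀ᵗ H(g(t-s)) f(s)² ds. -/
theorem stmt_4 (α₀ : ℝ) (hα₀ : α₀ ∈ Set.Ioo (0 : ℝ) 1)
    (H : ℝ → ℝ)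
    (hHnn : ∀ x ≥ (0 : ℝ), 0 ≤ H x)
    (hHconv : ConvexOn ℝ (Set.Ici 0) H)
    (hHmono : MonotoneOn H (Set.Ici 0))
    (hH0 : H 0 = 0)
    (H₁ : ℝ → ℝ)
    (hH₁def : ∀ s ≥ (0 : ℝ), H₁ s = α₀ * s ^ (1 - 1 / α₀) * H (s ^ (1 / α₀)))
    (hH₁conv : ConvexOn ℝ (Set.Ici 0) H₁)
    (hH₁0 : H₁ 0 = 0)
    (t : ℝ) (ht : 0 < t)
    (g : ℝ → ℝ) (hg : ContinuousOn g (Set.Icc 0 t))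
    (hgpos : ∀ s ∈ Set.Icc (0 : ℝ) t, 0 < g s)
    (f : ℝ → ℝ) (hf : ContinuousOn f (Set.Icc 0 t))
    (c : ℝ) (hc : c = ∫ s in (0 : ℝ)..t, g (t - s) ^ (1 - α₀) * f s ^ 2)
    (hcpos : 0 < c) :
    ∀ ϑ > (0 : ℝ), ϑ * c ≤ 1 →
      H₁ (ϑ * ∫ s in (0 : ℝ)..t, g (t - s) * f s ^ 2) ≤
        α₀ * ϑ * ∫ s in (0 : ℝ)..t, H (g (t - s)) * f s ^ 2 := by
  intro ϑ hϑ hϑc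
  obtain ⟨hα₀pos, hα₀lt⟩ := hα₀
  have hα₀ne : α₀ ≠ 0 := ne_of_gt hα₀pos
  -- notation
  set A := ∫ s in (0 : ℝ)..t, g (t - s) * f s ^ 2 with hA
  set B := ∫ s in (0 : ℝ)..t, H (g (t - s)) * f s ^ 2 with hB
  have hIcc : ∀ s ∈ Set.Icc (0 : ℝ) t, t - s ∈ Set.Icc (0 : ℝ) t := by
    intro s hs
    exact ⟨by linarith [hs.2], by linarith [hs.1]⟩
  have hgc : ContinuousOn (fun s => g (t - s)) (Set.Icc 0 t) :=
    hg.comp (continuousOn_const.sub continuousOn_id) hIcc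
  have hgc_pos : ∀ s ∈ Set.Icc (0 : ℝ) t, 0 < g (t - s) := fun s hs => hgpos _ (hIcc s hs)
  -- min and max of g(t-·) on [0,t]
  obtain ⟨sm, hsm, hmin⟩ :=
    isCompact_Icc.exists_isMinOn (Set.nonempty_Icc.2 ht.le) hgc
  obtain ⟨sM, hsM, hmax⟩ :=
    isCompact_Icc.exists_isMaxOn (Set.nonempty_Icc.2 ht.le) hgc
  set m := g (t - sm) with hmdef
  set M := g (t - sM) with hMdef
  have hm : 0 < m := hgc_pos sm hsm
  have hrange : ∀ s ∈ Set.Icc (0 : ℝ) t, m ≤ g (t - s) ∧ g (t - s) ≤ M := by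
    intro s hs
    exact ⟨hmin hs, hmax hs⟩
  -- the target set for Jensen
  set D : Set ℝ := Set.Icc (m ^ α₀) (M ^ α₀) with hDdef
  have hmpow : (0 : ℝ) < m ^ α₀ := Real.rpow_pos_of_pos hm _
  have hDIoi : D ⊆ Set.Ioi 0 := fun x hx => lt_of_lt_of_le hmpow hx.1
  have hDIci : D ⊆ Set.Ici 0 := fun x hx => Set.mem_Ici.2 (le_of_lt (hDIoi hx))
  set φ : ℝ → ℝ := fun s => g (t - s) ^ α₀ with hφdef
  have hφmem : ∀ s ∈ Set.Icc (0 : ℝ) t, φ s ∈ D := by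
    intro s hs
    exact ⟨Real.rpow_le_rpow hm.le (hrange s hs).1 hα₀pos.le,
      Real.rpow_le_rpow (hgc_pos s hs).le (hrange s hs).2 hα₀pos.le⟩
  have hφc : ContinuousOn φ (Set.Icc 0 t) :=
    hgc.rpow_const (fun s hs => Or.inl (ne_of_gt (hgc_pos s hs)))
  -- H₁ is convex and continuous on D
  have hH₁D : ConvexOn ℝ D H₁ := hH₁conv.subset hDIci (convex_Icc _ _)
  have hH₁cont : ContinuousOn H₁ D := by
    have := hH₁conv.continuousOn_interior
    rw [interior_Ici] at this
    exact this.mono hDIoi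
  -- weight function
  set w : ℝ → ℝ := fun s => g (t - s) ^ (1 - α₀) * f s ^ 2 with hwdef
  have hw_nonneg : ∀ s ∈ Set.Icc (0 : ℝ) t, 0 ≤ w s := fun s hs =>
    mul_nonneg (Real.rpow_nonneg (hgc_pos s hs).le _) (sq_nonneg _)
  have hwc : ContinuousOn w (Set.Icc 0 t) :=
    (hgc.rpow_const (fun s hs => Or.inl (ne_of_gt (hgc_pos s hs)))).mul (hf.pow 2)
  set ν : Measure ℝ := volume.restrict (Set.Ioc 0 t) with hνdef
  set W : ℝ → NNReal := fun s => (w s).toNNReal with hWdef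
  have hWmeas : AEMeasurable W ν :=
    ((hwc.mono Set.Ioc_subset_Icc_self).aemeasurable measurableSet_Ioc).real_toNNReal
  set μ : Measure ℝ := ν.withDensity (fun s => (W s : ENNReal)) with hμdef
  have haeIoc : ∀ᵐ x ∂ν, x ∈ Set.Ioc (0 : ℝ) t := ae_restrict_mem measurableSet_Ioc
  have haeW : ∀ᵐ x ∂ν, (W x : ℝ) = w x := by
    filter_upwards [haeIoc] with x hx
    exact Real.coe_toNNReal _ (hw_nonneg x (Set.Ioc_subset_Icc_self hx))
  -- key computation lemma
  have key : ∀ F : ℝ → ℝ, ContinuousOn F (Set.Icc 0 t) →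
      Integrable F μ ∧ ∫ x, F x ∂μ = ∫ s in (0 : ℝ)..t, w s * F s := by
    intro F hF
    have hInt : Integrable (fun x => w x * F x) ν :=
      ((hwc.mul hF).integrableOn_Icc).mono_set Set.Ioc_subset_Icc_self
    have hcongr : (fun x => (W x : ℝ) • F x) =ᵐ[ν] fun x => w x * F x := by
      filter_upwards [haeW] with x hx
      simp [hx, smul_eq_mul]
    constructor
    · rw [hμdef, integrable_withDensity_iff_integrable_coe_smul₀ hWmeas]
      exact hInt.congr hcongr.symm
    · rw [hμdef, integral_withDensity_eq_integral_smul₀ hWmeas]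
      have heq : ∫ x, W x • F x ∂ν = ∫ x, w x * F x ∂ν := by
        apply MeasureTheory.integral_congr_ae
        filter_upwards [haeW] with x hx
        simp [NNReal.smul_def, hx]
      rw [heq, intervalIntegral.integral_of_le ht.le]
  -- total mass of μ
  have hwint : Integrable w ν := hwc.integrableOn_Icc.mono_set Set.Ioc_subset_Icc_self
  have hcν : c = ∫ x, w x ∂ν := by
    rw [hc, intervalIntegral.integral_of_le ht.le]
  have hmass : μ Set.univ = ENNReal.ofReal c := by
    have h1 : μ Set.univ = ∫⁻ x, ((W x : ENNReal)) ∂ν := by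
      rw [hμdef, withDensity_apply _ MeasurableSet.univ, Measure.restrict_univ]
    have h2 : ∀ x, ((W x : ENNReal)) = ENNReal.ofReal (w x) := fun x => rfl
    rw [h1]
    simp_rw [h2]
    rw [← ofReal_integral_eq_lintegral_ofReal hwint
      (haeW.mono fun x hx => by rw [← hx]; exact (W x).2), hcν]
  have : IsFiniteMeasure μ := by
    constructor
    rw [hmass]
    exact ENNReal.ofReal_lt_top
  have : NeZero μ := by
    refine ⟨fun h => ?_⟩
    rw [h] at hmass
    simp only [Measure.coe_zero, Pi.zero_apply] at hmass
    exact absurd hmass.symm (by simpa [ENNReal.ofReal_eq_zero] using hcpos)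
  -- Jensen via average
  have hfs : ∀ᵐ x ∂μ, φ x ∈ D := by
    have hν : ∀ᵐ x ∂ν, φ x ∈ D := by
      filter_upwards [haeIoc] with x hx
      exact hφmem x (Set.Ioc_subset_Icc_self hx)
    exact hν.filter_mono (withDensity_absolutelyContinuous ν _).ae_le
  have hφDcont : ContinuousOn (fun s => H₁ (φ s)) (Set.Icc 0 t) :=
    hH₁cont.comp hφc hφmem
  have hfi : Integrable φ μ := (key φ hφc).1
  have hgi : Integrable (H₁ ∘ φ) μ := (key (H₁ ∘ φ) hφDcont).1
  have jensen := hH₁D.map_average_le hH₁cont isClosed_Icc hfs hfi hgi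
  -- compute the two integrals
  have hint1 : ∫ x, φ x ∂μ = A := by
    rw [(key φ hφc).2, hA]
    apply intervalIntegral.integral_congr
    intro s hs
    rw [Set.uIcc_of_le ht.le] at hs
    have hx : (0 : ℝ) < g (t - s) := hgc_pos s hs
    show w s * φ s = g (t - s) * f s ^ 2
    rw [hwdef, hφdef]
    have : g (t - s) ^ (1 - α₀) * f s ^ 2 * g (t - s) ^ α₀
        = g (t - s) ^ (1 - α₀) * g (t - s) ^ α₀ * f s ^ 2 := by ring
    rw [this, ← Real.rpow_add hx]
    norm_num
  have hint2 : ∫ x, (H₁ ∘ φ) x ∂μ = α₀ * B := by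
    rw [(key (H₁ ∘ φ) hφDcont).2, hB, ← intervalIntegral.integral_const_mul]
    apply intervalIntegral.integral_congr
    intro s hs
    rw [Set.uIcc_of_le ht.le] at hs
    have hx : (0 : ℝ) < g (t - s) := hgc_pos s hs
    show w s * H₁ (φ s) = α₀ * (H (g (t - s)) * f s ^ 2)
    have harith : α₀ * (1 - 1 / α₀) = α₀ - 1 := by field_simp
    simp only [hwdef, hφdef]
    rw [hH₁def _ (Real.rpow_pos_of_pos hx _).le, ← Real.rpow_mul hx.le,
      ← Real.rpow_mul hx.le, mul_one_div_cancel hα₀ne, Real.rpow_one, harith]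
    have hone : g (t - s) ^ (1 - α₀) * g (t - s) ^ (α₀ - 1) = 1 := by
      rw [← Real.rpow_add hx]
      norm_num
    calc g (t - s) ^ (1 - α₀) * f s ^ 2 * (α₀ * g (t - s) ^ (α₀ - 1) * H (g (t - s)))
        = g (t - s) ^ (1 - α₀) * g (t - s) ^ (α₀ - 1)
            * (α₀ * (H (g (t - s)) * f s ^ 2)) := by ring
      _ = α₀ * (H (g (t - s)) * f s ^ 2) := by rw [hone]; ring
  -- rewrite averages
  have hmassR : (μ Set.univ).toReal = c := by
    rw [hmass, ENNReal.toReal_ofReal hcpos.le]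
  have javg : H₁ (c⁻¹ * A) ≤ c⁻¹ * (α₀ * B) := by
    have h1 : ⨍ x, φ x ∂μ = c⁻¹ * A := by
      rw [average_eq, measureReal_def, hmassR, hint1, smul_eq_mul]
    have h2 : ⨍ x, H₁ (φ x) ∂μ = c⁻¹ * (α₀ * B) := by
      rw [average_eq, measureReal_def, hmassR, smul_eq_mul, show (∫ x, H₁ (φ x) ∂μ) = ∫ x, (H₁ ∘ φ) x ∂μ from rfl, hint2]
    rw [h1, h2] at jensen
    exact jensen
  -- nonnegativity of A
  have hAnn : 0 ≤ A := by
    rw [hA]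
    apply intervalIntegral.integral_nonneg ht.le
    intro s hs
    exact mul_nonneg (hgc_pos s hs).le (sq_nonneg _)
  have hcne : c ≠ 0 := ne_of_gt hcpos
  -- convexity step: H₁(ϑA) ≤ ϑc · H₁(c⁻¹A)
  have hstep : H₁ (ϑ * A) ≤ (ϑ * c) * H₁ (c⁻¹ * A) := by
    have hx : c⁻¹ * A ∈ Set.Ici (0 : ℝ) :=
      mul_nonneg (inv_nonneg.2 hcpos.le) hAnn
    have hy : (0 : ℝ) ∈ Set.Ici (0 : ℝ) := Set.self_mem_Ici
    have hab : ϑ * c + (1 - ϑ * c) = 1 := by ring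
    have hconv := hH₁conv.2 hx hy (mul_nonneg hϑ.le hcpos.le)
      (by linarith : (0 : ℝ) ≤ 1 - ϑ * c) hab
    simp only [smul_eq_mul, mul_zero, add_zero, hH₁0] at hconv
    have harg : ϑ * c * (c⁻¹ * A) = ϑ * A := by
      field_simp
    rw [harg] at hconv
    linarith
  calc H₁ (ϑ * A) ≤ (ϑ * c) * H₁ (c⁻¹ * A) := hstep
    _ ≤ (ϑ * c) * (c⁻¹ * (α₀ * B)) :=
        mul_le_mul_of_nonneg_left javg (mul_nonneg hϑ.le hcpos.le)
    _ = α₀ * ϑ * B := by field_simp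
end

section
/- (Lasiecka–Tataru lemma.) Let p : [0,∞) → [0,∞) be continuous and strictly increasing with p(0) = 0, and suppose r : [0,∞) → [0,∞) satisfies r(x) + p(r(x)) = x for all x ≥ 0 (i.e. r is the inverse of the map x ↦ x + p(x)). Define q(x) = x − r(x). Let (s_m)_{m≥0} be a sequence of nonnegative real numbers satisfying s_{m+1} + p(s_{m+1}) ≤ s_m for all m ≥ 0, and let S : [0,∞) → [0,∞) be a solution of the differential equation S'(t) + q(S(t)) = 0 with S(0) = s₀. Then s_m ≤ S(m) for every nonnegative integer m. Moreover, if p(x) > 0 for all x > 0, then S(t) → 0 as t → ∞. -/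
open Filter

/-- Lasiecka–Tataru lemma: with p positive increasing, p(0)=0,
r the inverse of I + p, and q = I − r, any sequence with
s_{m+1} + p(s_{m+1}) ≤ s_m is dominated by the solution S of S' + q(S) = 0,
S(0) = s₀; and if p > 0 on (0,∞) then S(t) → 0 as t → ∞. -/
theorem stmt_5 (p : ℝ → ℝ)
    (hpcont : ContinuousOn p (Set.Ici 0))
    (hpmono : StrictMonoOn p (Set.Ici 0))
    (hp0 : p 0 = 0)
    (hpnn : ∀ x ≥ (0 : ℝ), 0 ≤ p x)
    (r : ℝ → ℝ)
    (hrnn : ∀ x ≥ (0 : ℝ), 0 ≤ r x)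
    (hr : ∀ x ≥ (0 : ℝ), r x + p (r x) = x)
    (q : ℝ → ℝ)
    (hq : ∀ x ≥ (0 : ℝ), q x = x - r x)
    (s : ℕ → ℝ)
    (hsnn : ∀ m, 0 ≤ s m)
    (hsdec : ∀ m, s (m + 1) + p (s (m + 1)) ≤ s m)
    (S : ℝ → ℝ)
    (hSnn : ∀ t ≥ (0 : ℝ), 0 ≤ S t)
    (hSderiv : ∀ t ≥ (0 : ℝ), HasDerivAt S (-(q (S t))) t)
    (hS0 : S 0 = s 0) :
    (∀ m : ℕ, s m ≤ S m) ∧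
      ((∀ x > (0 : ℝ), 0 < p x) → Tendsto S atTop (nhds 0)) := by
  have hrle : ∀ x ≥ (0:ℝ), r x ≤ x := by
    intro x hx
    have h1 := hr x hx
    have h2 := hpnn (r x) (hrnn x hx)
    linarith
  have hqnn : ∀ x ≥ (0:ℝ), 0 ≤ q x := by
    intro x hx; rw [hq x hx]; linarith [hrle x hx]
  have hrmono : ∀ x y : ℝ, 0 ≤ x → x ≤ y → r x ≤ r y := by
    intro x y hx hxy
    by_contra h
    push_neg at h
    have h1 := hpmono (hrnn y (le_trans hx hxy)) (hrnn x hx) h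
    have h2 := hr x hx
    have h3 := hr y (le_trans hx hxy)
    linarith
  have hqmono : ∀ x y : ℝ, 0 ≤ x → x ≤ y → q x ≤ q y := by
    intro x y hx hxy
    have hy := le_trans hx hxy
    rw [hq x hx, hq y hy]
    have hx' := hr x hx
    have hy' := hr y hy
    have hpm : p (r x) ≤ p (r y) :=
      hpmono.monotoneOn (hrnn x hx) (hrnn y hy) (hrmono x y hx hxy)
    linarith
  have hScont : ContinuousOn S (Set.Ici 0) := fun t ht =>
    ((hSderiv t ht).continuousAt).continuousWithinAt
  have hSanti : AntitoneOn S (Set.Ici 0) := by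
    apply antitoneOn_of_deriv_nonpos (convex_Ici 0) hScont
    · intro x hx
      rw [interior_Ici] at hx
      exact ((hSderiv x hx.le).differentiableAt).differentiableWithinAt
    · intro x hx
      rw [interior_Ici] at hx
      rw [(hSderiv x hx.le).deriv]
      linarith [hqnn (S x) (hSnn x hx.le)]
  have keyg : ∀ (c a b : ℝ), 0 ≤ a → ∀ t ∈ Set.Icc a b,
      HasDerivAt (fun u => S u + c * u) (-(q (S t)) + c) t := by
    intro c a b ha t ht
    have h1 : HasDerivAt S (-(q (S t))) t := hSderiv t (le_trans ha ht.1)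
    have h2 : HasDerivAt (fun u : ℝ => c * u) c t := by
      simpa using (hasDerivAt_id t).const_mul c
    exact h1.add h2
  -- upper bound: if q (S t) ≥ c on [a,b] then S b ≤ S a - c (b - a)
  have upper : ∀ (c a b : ℝ), 0 ≤ a → a ≤ b → (∀ t ∈ Set.Icc a b, c ≤ q (S t)) →
      S b ≤ S a - c * (b - a) := by
    intro c a b ha hab hc
    have hg : AntitoneOn (fun u => S u + c * u) (Set.Icc a b) := by
      apply antitoneOn_of_deriv_nonpos (convex_Icc a b)
      · intro t ht
        exact ((keyg c a b ha t ht).differentiableAt).continuousAt.continuousWithinAt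
      · intro t ht
        rw [interior_Icc] at ht
        exact ((keyg c a b ha t ⟨ht.1.le, ht.2.le⟩).differentiableAt).differentiableWithinAt
      · intro t ht
        rw [interior_Icc] at ht
        rw [(keyg c a b ha t ⟨ht.1.le, ht.2.le⟩).deriv]
        linarith [hc t ⟨ht.1.le, ht.2.le⟩]
    have h := hg (Set.left_mem_Icc.2 hab) (Set.right_mem_Icc.2 hab) hab
    simp only at h
    nlinarith
  -- lower bound: if q (S t) ≤ c on [a,b] then S a - c (b - a) ≤ S b
  have lower : ∀ (c a b : ℝ), 0 ≤ a → a ≤ b → (∀ t ∈ Set.Icc a b, q (S t) ≤ c) →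
      S a - c * (b - a) ≤ S b := by
    intro c a b ha hab hc
    have hg : MonotoneOn (fun u => S u + c * u) (Set.Icc a b) := by
      apply monotoneOn_of_deriv_nonneg (convex_Icc a b)
      · intro t ht
        exact ((keyg c a b ha t ht).differentiableAt).continuousAt.continuousWithinAt
      · intro t ht
        rw [interior_Icc] at ht
        exact ((keyg c a b ha t ⟨ht.1.le, ht.2.le⟩).differentiableAt).differentiableWithinAt
      · intro t ht
        rw [interior_Icc] at ht
        rw [(keyg c a b ha t ⟨ht.1.le, ht.2.le⟩).deriv]
        linarith [hc t ⟨ht.1.le, ht.2.le⟩]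
    have h := hg (Set.left_mem_Icc.2 hab) (Set.right_mem_Icc.2 hab) hab
    simp only at h
    nlinarith
  have part1 : ∀ m : ℕ, s m ≤ S m := by
    intro m
    induction m with
    | zero => simp [hS0]
    | succ m ih =>
      have hm0 : (0:ℝ) ≤ (m:ℝ) := Nat.cast_nonneg m
      have hSm : (0:ℝ) ≤ S m := hSnn m hm0
      have h1 : s (m+1) ≤ r (s m) := by
        by_contra h
        push_neg at h
        have hpgt := hpmono (hrnn (s m) (hsnn m)) (hsnn (m+1)) h
        have := hr (s m) (hsnn m)
        linarith [hsdec m]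
      have h2 : r (s m) ≤ r (S m) := hrmono _ _ (hsnn m) ih
      have h3 : S (m:ℝ) - q (S (m:ℝ)) * (((m:ℝ)+1) - (m:ℝ)) ≤ S ((m:ℝ)+1) := by
        apply lower (q (S (m:ℝ))) (m:ℝ) ((m:ℝ)+1) hm0 (by linarith)
        intro t ht
        exact hqmono _ _ (hSnn t (le_trans hm0 ht.1))
          (hSanti (Set.mem_Ici.2 hm0) (Set.mem_Ici.2 (le_trans hm0 ht.1)) ht.1)
      have h3' : S (m:ℝ) - q (S (m:ℝ)) ≤ S ((m:ℝ)+1) := by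
        have e : (((m:ℝ)+1) - (m:ℝ)) = 1 := by ring
        rw [e, mul_one] at h3
        exact h3
      have h4 : q (S (m:ℝ)) = S (m:ℝ) - r (S (m:ℝ)) := hq (S (m:ℝ)) hSm
      push_cast
      linarith
  refine ⟨part1, fun hp => ?_⟩
  have hqpos : ∀ x > (0:ℝ), 0 < q x := by
    intro x hx
    rw [hq x hx.le]
    have hrx : 0 < r x := by
      rcases lt_or_eq_of_le (hrnn x hx.le) with h | h
      · exact h
      · exfalso
        have h1 := hr x hx.le
        rw [← h, hp0] at h1
        linarith
    have h2 := hp (r x) hrx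
    have h3 := hr x hx.le
    linarith
  rw [Metric.tendsto_atTop]
  intro ε hε
  have hexists : ∃ t0 : ℝ, 0 ≤ t0 ∧ S t0 < ε := by
    by_contra h
    push_neg at h
    have hcpos : 0 < q ε := hqpos ε hε
    set T := S 0 / q ε + 1 with hT
    have hT0 : (0:ℝ) ≤ T := by
      have := hSnn 0 le_rfl
      positivity
    have hub := upper (q ε) 0 T le_rfl hT0 ?_
    · have hcT : q ε * T = S 0 + q ε := by
        rw [hT, mul_add, mul_one, mul_comm, div_mul_cancel₀ (S 0) hcpos.ne']
      have hST := h T hT0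
      rw [sub_zero] at hub
      nlinarith
    · intro t ht
      exact hqmono _ _ hε.le (h t ht.1)
  obtain ⟨t0, ht0, hSt0⟩ := hexists
  refine ⟨t0, fun t ht => ?_⟩
  have ht' : (0:ℝ) ≤ t := le_trans ht0 ht
  have hle : S t ≤ S t0 := hSanti (Set.mem_Ici.2 ht0) (Set.mem_Ici.2 ht') ht
  rw [Real.dist_eq, sub_zero, abs_of_nonneg (hSnn t ht')]
  linarith
end

section
/- (Comparison lemma.) Let H : [0,∞) → [0,∞) be continuous with H(0) = 0 and H(x) > 0 for all x > 0. Let α₀ ∈ (0,1], β > 0 and κ ≥ 0. Let y : [0,∞) → (0,∞) be differentiable with y'(t) + H(y(t)) = 0 for all t ≥ 0, and let s : [0,∞) → (0,∞) be differentiable with s'(t) ≤ −β · α₀ · s(t)^{1 − 1/α₀} · H(s(t)^{1/α₀}) for all t ≥ 0. If s(0)^{1/α₀} ≤ y(κ), then s(t) ≤ y(βt + κ)^{α₀} for all t ≥ 0. -/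
open intervalIntegral MeasureTheory

/-- Comparison lemma: with H continuous, H(0)=0, H>0 on (0,∞),
α₀ ∈ (0,1], β > 0, κ ≥ 0, if y' + H(y) = 0 and
s' ≤ −β α₀ s^{1−1/α₀} H(s^{1/α₀}), and s(0)^{1/α₀} ≤ y(κ),
then s(t) ≤ y(βt + κ)^{α₀} for all t ≥ 0. -/
theorem stmt_7 (H : ℝ → ℝ)
    (hHcont : ContinuousOn H (Set.Ici 0))
    (hH0 : H 0 = 0)
    (hHpos : ∀ x > (0 : ℝ), 0 < H x)
    (α₀ : ℝ) (hα₀ : α₀ ∈ Set.Ioc (0 : ℝ) 1)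
    (β : ℝ) (hβ : 0 < β) (κ : ℝ) (hκ : 0 ≤ κ)
    (y : ℝ → ℝ) (hypos : ∀ t ≥ (0 : ℝ), 0 < y t)
    (hyderiv : ∀ t ≥ (0 : ℝ), HasDerivAt y (-(H (y t))) t)
    (s : ℝ → ℝ) (hspos : ∀ t ≥ (0 : ℝ), 0 < s t)
    (hsdiff : ∀ t ≥ (0 : ℝ), DifferentiableAt ℝ s t)
    (hsineq : ∀ t ≥ (0 : ℝ),
      deriv s t ≤ -β * α₀ * s t ^ (1 - 1 / α₀) * H (s t ^ (1 / α₀)))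
    (hinit : s 0 ^ (1 / α₀) ≤ y κ) :
    ∀ t ≥ (0 : ℝ), s t ≤ y (β * t + κ) ^ α₀ := by
  obtain ⟨hα₀pos, hα₀le⟩ := hα₀
  intro t₀ ht₀
  -- the two comparison functions in `y`-coordinates
  set u : ℝ → ℝ := fun t => s t ^ (1 / α₀) with hu_def
  set v : ℝ → ℝ := fun t => y (β * t + κ) with hv_def
  have hβtκ : ∀ t ≥ (0:ℝ), (0:ℝ) ≤ β * t + κ := fun t ht =>
    add_nonneg (mul_nonneg hβ.le ht) hκ
  have hupos : ∀ t ≥ (0:ℝ), 0 < u t := fun t ht =>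
    Real.rpow_pos_of_pos (hspos t ht) _
  have hvpos : ∀ t ≥ (0:ℝ), 0 < v t := fun t ht => hypos _ (hβtκ t ht)
  -- derivatives of u and v
  have hu : ∀ t ≥ (0:ℝ), HasDerivAt u
      (deriv s t * (1 / α₀) * s t ^ (1 / α₀ - 1)) t := by
    intro t ht
    exact ((hsdiff t ht).hasDerivAt).rpow_const (Or.inl (hspos t ht).ne')
  have hv : ∀ t ≥ (0:ℝ), HasDerivAt v (-(H (v t)) * β) t := by
    intro t ht
    have haff : HasDerivAt (fun t : ℝ => β * t + κ) β t := by
      simpa using ((hasDerivAt_id t).const_mul β).add_const κ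
    exact (hyderiv _ (hβtκ t ht)).comp t haff
  have huineq : ∀ t ≥ (0:ℝ),
      deriv s t * (1 / α₀) * s t ^ (1 / α₀ - 1) ≤ -β * H (u t) := by
    intro t ht
    have hs := hspos t ht
    have h1 : deriv s t * (1 / α₀) * s t ^ (1 / α₀ - 1)
        ≤ (-β * α₀ * s t ^ (1 - 1 / α₀) * H (u t)) * (1 / α₀) * s t ^ (1 / α₀ - 1) := by
      have := hsineq t ht
      have h2 : (0:ℝ) ≤ (1 / α₀) * s t ^ (1 / α₀ - 1) :=
        mul_nonneg (by positivity) (Real.rpow_nonneg hs.le _)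
      nlinarith [Real.rpow_nonneg hs.le (1 / α₀ - 1), mul_le_mul_of_nonneg_right this h2]
    refine h1.trans_eq ?_
    have h3 : s t ^ (1 - 1 / α₀) * s t ^ (1 / α₀ - 1) = 1 := by
      rw [← Real.rpow_add hs]; norm_num
    have hα₀ne : α₀ ≠ 0 := hα₀pos.ne'
    rw [show -β * α₀ * s t ^ (1 - 1 / α₀) * H (u t) * (1 / α₀) * s t ^ (1 / α₀ - 1)
        = -β * H (u t) * (α₀ * (1 / α₀)) * (s t ^ (1 - 1 / α₀) * s t ^ (1 / α₀ - 1)) by ring]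
    rw [h3, mul_one, mul_one_div, div_self hα₀ne, mul_one]
  -- positive lower bound on u, v over [0, t₀]
  have hIcc : ∀ t ∈ Set.Icc (0:ℝ) t₀, (0:ℝ) ≤ t := fun t ht => ht.1
  have hucont : ContinuousOn u (Set.Icc 0 t₀) := fun t ht =>
    ((hu t (hIcc t ht)).continuousAt).continuousWithinAt
  have hvcont : ContinuousOn v (Set.Icc 0 t₀) := fun t ht =>
    ((hv t (hIcc t ht)).continuousAt).continuousWithinAt
  have hne : (Set.Icc (0:ℝ) t₀).Nonempty := ⟨0, le_refl 0, ht₀⟩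
  obtain ⟨tu, htu, htumin⟩ := isCompact_Icc.exists_isMinOn hne hucont
  obtain ⟨tv, htv, htvmin⟩ := isCompact_Icc.exists_isMinOn hne hvcont
  set m : ℝ := min (u tu) (v tv) with hm_def
  have hmpos : 0 < m := lt_min (hupos tu (hIcc tu htu)) (hvpos tv (hIcc tv htv))
  have hmu : ∀ t ∈ Set.Icc (0:ℝ) t₀, m ≤ u t := fun t ht =>
    le_trans (min_le_left _ _) (htumin ht)
  have hmv : ∀ t ∈ Set.Icc (0:ℝ) t₀, m ≤ v t := fun t ht =>
    le_trans (min_le_right _ _) (htvmin ht)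
  -- auxiliary integrand
  set g : ℝ → ℝ := fun x => (β * H (max x m))⁻¹ with hg_def
  have hmaxpos : ∀ x : ℝ, 0 < max x m := fun x => lt_of_lt_of_le hmpos (le_max_right _ _)
  have hgpos : ∀ x : ℝ, 0 < g x := fun x =>
    inv_pos.2 (mul_pos hβ (hHpos _ (hmaxpos x)))
  have hgcont : Continuous g := by
    rw [continuous_iff_continuousAt]
    intro x
    have hmax : ContinuousAt (fun x : ℝ => max x m) x :=
      (continuous_id.max continuous_const).continuousAt
    have hHx : ContinuousAt H (max x m) :=
      hHcont.continuousAt (Ici_mem_nhds (hmaxpos x))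
    have hHmax : ContinuousAt (fun r : ℝ => H (max r m)) x :=
      ContinuousAt.comp hHx hmax
    exact (continuousAt_const.mul hHmax).inv₀
      (mul_pos hβ (hHpos _ (hmaxpos x))).ne'
  set G : ℝ → ℝ := fun x => ∫ r in (0:ℝ)..x, g r with hG_def
  have hG : ∀ x : ℝ, HasDerivAt G (g x) x := by
    intro x
    exact intervalIntegral.integral_hasDerivAt_right
      (hgcont.intervalIntegrable _ _)
      (hgcont.aestronglyMeasurable.stronglyMeasurableAtFilter)
      hgcont.continuousAt
  have hGmono : StrictMono G := by
    apply strictMono_of_deriv_pos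
    intro x
    rw [(hG x).deriv]
    exact hgpos x
  -- the monotone comparison function
  set Φ : ℝ → ℝ := fun t => G (v t) - G (u t) with hΦ_def
  have hΦderiv : ∀ t ∈ Set.Icc (0:ℝ) t₀, HasDerivAt Φ
      (g (v t) * (-(H (v t)) * β) -
        g (u t) * (deriv s t * (1 / α₀) * s t ^ (1 / α₀ - 1))) t := by
    intro t ht
    exact (((hG (v t)).comp t (hv t (hIcc t ht)))).sub
      (((hG (u t)).comp t (hu t (hIcc t ht))))
  have hΦnonneg : ∀ t ∈ Set.Icc (0:ℝ) t₀,
      0 ≤ g (v t) * (-(H (v t)) * β) -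
        g (u t) * (deriv s t * (1 / α₀) * s t ^ (1 / α₀ - 1)) := by
    intro t ht
    have ht0 := hIcc t ht
    have hHv : 0 < H (v t) := hHpos _ (hvpos t ht0)
    have hHu : 0 < H (u t) := hHpos _ (hupos t ht0)
    have hgv : g (v t) = (β * H (v t))⁻¹ := by
      simp only [hg_def, max_eq_left (hmv t ht)]
    have hgu : g (u t) = (β * H (u t))⁻¹ := by
      simp only [hg_def, max_eq_left (hmu t ht)]
    have h1 : g (v t) * (-(H (v t)) * β) = -1 := by
      rw [hgv]; field_simp; try ring
    have h2 : g (u t) * (deriv s t * (1 / α₀) * s t ^ (1 / α₀ - 1)) ≤ -1 := by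
      have := mul_le_mul_of_nonneg_left (huineq t ht0) (hgpos (u t)).le
      refine this.trans_eq ?_
      rw [hgu]; field_simp; try ring
    linarith
  have hΦmono : MonotoneOn Φ (Set.Icc 0 t₀) := by
    apply monotoneOn_of_deriv_nonneg (convex_Icc 0 t₀)
    · exact fun t ht => ((hΦderiv t ht).continuousAt).continuousWithinAt
    · intro t ht
      have ht' : t ∈ Set.Icc (0:ℝ) t₀ := interior_subset ht
      exact ((hΦderiv t ht').differentiableAt).differentiableWithinAt
    · intro t ht
      have ht' : t ∈ Set.Icc (0:ℝ) t₀ := interior_subset ht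
      rw [(hΦderiv t ht').deriv]
      exact hΦnonneg t ht'
  have hΦ0 : 0 ≤ Φ 0 := by
    have hv0 : v 0 = y κ := by simp [hv_def]
    have : u 0 ≤ v 0 := by rw [hv0]; exact hinit
    simpa [hΦ_def, sub_nonneg] using hGmono.monotone this
  have hΦt₀ : 0 ≤ Φ t₀ :=
    le_trans hΦ0 (hΦmono ⟨le_refl 0, ht₀⟩ ⟨ht₀, le_refl t₀⟩ ht₀)
  have huv : u t₀ ≤ v t₀ := by
    have : G (u t₀) ≤ G (v t₀) := by
      simp only [hΦ_def, sub_nonneg] at hΦt₀; exact hΦt₀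
    exact hGmono.le_iff_le.mp this
  -- translate back
  have hst : s t₀ = u t₀ ^ α₀ := by
    rw [hu_def]
    simp only
    rw [← Real.rpow_mul (hspos t₀ ht₀).le, one_div, inv_mul_cancel₀ hα₀pos.ne',
      Real.rpow_one]
  calc s t₀ = u t₀ ^ α₀ := hst
    _ ≤ v t₀ ^ α₀ := Real.rpow_le_rpow (hupos t₀ ht₀).le huv hα₀pos.le
    _ = y (β * t₀ + κ) ^ α₀ := rfl
end

section
/- Let α₀ ∈ (0,1) and let y : [0,∞) → (0,∞) be a continuous decreasing function tending to 0 at infinity such that L := ∫₀^∞ y(t)^{1−α₀} dt < ∞. Let m be a positive integer with m·α₀ < 1, let β ≥ 1 and κ ≥ 0, and let k be an integer with 1 ≤ k ≤ m. Then the function I_k(t) = ∫₀ᵗ y(t−s)^{1−kα₀} · y(βs + κ)^{(k−1)α₀} ds is bounded uniformly in t, i.e. sup_{t>0} I_k(t) < ∞. Moreover, if y(0) ≤ 1, then I_k(t) ≤ 2L for all t > 0. -/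
open MeasureTheory intervalIntegral Filter

/-- α-sequence, terms k = 1,…,m: with y positive continuous decreasing
to 0 and L = ∫₀^∞ y^{1−α₀} < ∞, m α₀ < 1, β ≥ 1, κ ≥ 0, each
I_k(t) = ∫₀ᵗ y(t−s)^{1−kα₀} y(βs+κ)^{(k−1)α₀} ds is bounded uniformly in t;
moreover I_k(t) ≤ 2L when y(0) ≤ 1. -/
theorem stmt_10 (α₀ : ℝ) (hα₀ : α₀ ∈ Set.Ioo (0 : ℝ) 1)
    (y : ℝ → ℝ)
    (hycont : ContinuousOn y (Set.Ici 0))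
    (hypos : ∀ t ≥ (0 : ℝ), 0 < y t)
    (hydec : AntitoneOn y (Set.Ici 0))
    (hylim : Tendsto y atTop (nhds 0))
    (hint : IntegrableOn (fun t => y t ^ (1 - α₀)) (Set.Ioi 0))
    (L : ℝ) (hL : L = ∫ t in Set.Ioi (0 : ℝ), y t ^ (1 - α₀))
    (m : ℕ) (hm : 0 < m) (hmα : (m : ℝ) * α₀ < 1)
    (β κ : ℝ) (hβ : 1 ≤ β) (hκ : 0 ≤ κ)
    (k : ℕ) (hk1 : 1 ≤ k) (hkm : k ≤ m) :
    (∃ M : ℝ, ∀ t > (0 : ℝ),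
        (∫ s in (0 : ℝ)..t,
          y (t - s) ^ (1 - (k : ℝ) * α₀) * y (β * s + κ) ^ (((k : ℝ) - 1) * α₀)) ≤ M) ∧
      (y 0 ≤ 1 → ∀ t > (0 : ℝ),
        (∫ s in (0 : ℝ)..t,
          y (t - s) ^ (1 - (k : ℝ) * α₀) * y (β * s + κ) ^ (((k : ℝ) - 1) * α₀)) ≤ 2 * L) := by
  obtain ⟨hα0, hα1⟩ := hα₀
  have hk1' : (1:ℝ) ≤ (k:ℝ) := by exact_mod_cast hk1
  have hkm' : (k:ℝ) ≤ (m:ℝ) := by exact_mod_cast hkm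
  have hkα : (k:ℝ) * α₀ < 1 := lt_of_le_of_lt (by nlinarith) hmα
  have he1 : 0 ≤ 1 - (k:ℝ) * α₀ := by linarith
  have he2 : 0 ≤ ((k:ℝ) - 1) * α₀ := by nlinarith
  set g : ℝ → ℝ := fun s => y s ^ (1 - α₀) with hgdef
  set f : ℝ → ℝ → ℝ := fun t s =>
    y (t - s) ^ (1 - (k : ℝ) * α₀) * y (β * s + κ) ^ (((k : ℝ) - 1) * α₀) with hfdef
  have hgcont : ContinuousOn g (Set.Ici 0) := by
    apply hycont.rpow_const
    intro x hx; exact Or.inl (hypos x hx).ne'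
  -- the key uniform bound
  have key : ∀ t > (0:ℝ), (∫ s in (0:ℝ)..t, f t s) ≤ 2 * L := by
    intro t ht
    have ht2 : (0:ℝ) ≤ t / 2 := by linarith
    have ht2t : t / 2 ≤ t := by linarith
    -- continuity of f t on [0, t]
    have hfcont : ContinuousOn (f t) (Set.Icc 0 t) := by
      apply ContinuousOn.mul
      · apply ContinuousOn.rpow_const
        · exact hycont.comp (continuousOn_const.sub continuousOn_id)
            (fun s hs => by simp only [Set.mem_Ici]; linarith [hs.2])
        · intro s hs
          exact Or.inl (hypos _ (by linarith [hs.2])).ne'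
      · apply ContinuousOn.rpow_const
        · exact hycont.comp (by fun_prop)
            (fun s hs => by simp only [Set.mem_Ici]; nlinarith [hs.1])
        · intro s hs
          exact Or.inl (hypos _ (by nlinarith [hs.1])).ne'
    have hfint1 : IntervalIntegrable (f t) volume 0 (t/2) :=
      (hfcont.mono (by rw [Set.uIcc_of_le ht2]; exact Set.Icc_subset_Icc_right ht2t)).intervalIntegrable
    have hfint2 : IntervalIntegrable (f t) volume (t/2) t :=
      (hfcont.mono (by rw [Set.uIcc_of_le ht2t]; exact Set.Icc_subset_Icc_left ht2)).intervalIntegrable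
    have hgint1 : IntervalIntegrable g volume 0 (t/2) :=
      (hgcont.mono (by rw [Set.uIcc_of_le ht2]; exact fun x hx => hx.1)).intervalIntegrable
    have hgtcont : ContinuousOn (fun s => g (t - s)) (Set.Icc (t/2) t) := by
      apply hgcont.comp (continuousOn_const.sub continuousOn_id)
      intro s hs; simp only [Set.mem_Ici, Pi.sub_apply, id]; linarith [hs.2]
    have hgint2 : IntervalIntegrable (fun s => g (t - s)) volume (t/2) t :=
      (hgtcont.mono (by rw [Set.uIcc_of_le ht2t])).intervalIntegrable
    -- pointwise bound on [0, t/2]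
    have h1 : ∀ s ∈ Set.Icc (0:ℝ) (t/2), f t s ≤ g s := by
      intro s hs
      obtain ⟨hs0, hs2⟩ := hs
      have hts0 : (0:ℝ) ≤ t - s := by linarith
      have hbs0 : (0:ℝ) ≤ β * s + κ := by nlinarith
      have hyA : y (t - s) ≤ y s := hydec hs0 hts0 (by linarith)
      have hyB : y (β * s + κ) ≤ y s := hydec hs0 hbs0 (by nlinarith)
      have hys := hypos s hs0
      calc f t s ≤ y s ^ (1 - (k:ℝ) * α₀) * y s ^ (((k:ℝ) - 1) * α₀) := by
            apply mul_le_mul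
            · exact Real.rpow_le_rpow (hypos _ hts0).le hyA he1
            · exact Real.rpow_le_rpow (hypos _ hbs0).le hyB he2
            · exact Real.rpow_nonneg (hypos _ hbs0).le _
            · exact Real.rpow_nonneg hys.le _
        _ = y s ^ ((1 - (k:ℝ) * α₀) + ((k:ℝ) - 1) * α₀) := (Real.rpow_add hys _ _).symm
        _ = g s := by norm_num; ring_nf; rfl
    -- pointwise bound on [t/2, t]
    have h2 : ∀ s ∈ Set.Icc (t/2) t, f t s ≤ g (t - s) := by
      intro s hs
      obtain ⟨hs2, hst⟩ := hs
      have hs0 : (0:ℝ) ≤ s := by linarith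
      have hts0 : (0:ℝ) ≤ t - s := by linarith
      have hbs0 : (0:ℝ) ≤ β * s + κ := by nlinarith
      have hyB : y (β * s + κ) ≤ y (t - s) := hydec hts0 hbs0 (by nlinarith)
      have hyts := hypos _ hts0
      calc f t s ≤ y (t - s) ^ (1 - (k:ℝ) * α₀) * y (t - s) ^ (((k:ℝ) - 1) * α₀) := by
            apply mul_le_mul_of_nonneg_left
            · exact Real.rpow_le_rpow (hypos _ hbs0).le hyB he2
            · exact Real.rpow_nonneg hyts.le _
        _ = y (t - s) ^ ((1 - (k:ℝ) * α₀) + ((k:ℝ) - 1) * α₀) := (Real.rpow_add hyts _ _).symm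
        _ = g (t - s) := by norm_num; ring_nf; rfl
    -- the half-line estimate: ∫₀^{t/2} g ≤ L
    have hhalf : (∫ s in (0:ℝ)..(t/2), g s) ≤ L := by
      rw [intervalIntegral.integral_of_le ht2, hL]
      apply setIntegral_mono_set hint
      · filter_upwards [ae_restrict_mem measurableSet_Ioi] with x hx
        exact Real.rpow_nonneg (hypos x (le_of_lt hx)).le _
      · exact HasSubset.Subset.eventuallyLE Set.Ioc_subset_Ioi_self
    have split : (∫ s in (0:ℝ)..t, f t s)
        = (∫ s in (0:ℝ)..(t/2), f t s) + (∫ s in (t/2)..t, f t s) :=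
      (intervalIntegral.integral_add_adjacent_intervals hfint1 hfint2).symm
    have b1 : (∫ s in (0:ℝ)..(t/2), f t s) ≤ ∫ s in (0:ℝ)..(t/2), g s :=
      intervalIntegral.integral_mono_on ht2 hfint1 hgint1 h1
    have b2 : (∫ s in (t/2)..t, f t s) ≤ ∫ s in (t/2)..t, g (t - s) :=
      intervalIntegral.integral_mono_on ht2t hfint2 hgint2 h2
    have hcomp : (∫ s in (t/2)..t, g (t - s)) = ∫ s in (0:ℝ)..(t/2), g s := by
      rw [intervalIntegral.integral_comp_sub_left g t]
      have h : t - t/2 = t/2 := by ring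
      rw [h, sub_self]
    linarith [hhalf]
  refine ⟨⟨2 * L, key⟩, fun _ => key⟩
end

section
/- Let H be a real normed vector space, let A : H → H be a continuous linear map, and let τ > 0, b > 0, α ∈ ℝ, c ∈ ℝ. Set γ = α − c²τ/b. Suppose u : ℝ → H is three times differentiable and satisfies τ·u'''(t) + α·u''(t) + c²·A(u(t)) + b·A(u'(t)) = 0 for all t. Then the function z(t) = u'(t) + (c²/b)·u(t) is twice differentiable and satisfies τ·z''(t) + b·A(z(t)) + γ·z'(t) = (γc²/b)·u'(t) for all t. -/
/-- the change of variables z = u_t + (c²/b)u transforms the MGT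
equation τu''' + αu'' + c²Au + bAu' = 0 into τz'' + bAz + γz' = (γc²/b)u',
where γ = α − c²τ/b. -/
theorem stmt_13 {H : Type*} [NormedAddCommGroup H] [NormedSpace ℝ H]
    (A : H →L[ℝ] H)
    (τ b α c : ℝ) (hτ : 0 < τ) (hb : 0 < b)
    (γ : ℝ) (hγ : γ = α - c ^ 2 * τ / b)
    (u u' u'' u''' : ℝ → H)
    (hu : ∀ t : ℝ, HasDerivAt u (u' t) t)
    (hu' : ∀ t : ℝ, HasDerivAt u' (u'' t) t)
    (hu'' : ∀ t : ℝ, HasDerivAt u'' (u''' t) t)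
    (heq : ∀ t : ℝ,
      τ • u''' t + α • u'' t + c ^ 2 • A (u t) + b • A (u' t) = 0) :
    ∃ z' z'' : ℝ → H,
      (∀ t : ℝ, HasDerivAt (fun t => u' t + (c ^ 2 / b) • u t) (z' t) t) ∧
      (∀ t : ℝ, HasDerivAt z' (z'' t) t) ∧
      (∀ t : ℝ,
        τ • z'' t + b • A (u' t + (c ^ 2 / b) • u t) + γ • z' t =
          (γ * c ^ 2 / b) • u' t) := by
  have hb' : b ≠ 0 := hb.ne'
  refine ⟨fun t => u'' t + (c ^ 2 / b) • u' t,
    fun t => u''' t + (c ^ 2 / b) • u'' t, ?_, ?_, ?_⟩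
  · intro t; exact (hu' t).add ((hu t).const_smul _)
  · intro t; exact (hu'' t).add ((hu' t).const_smul _)
  · intro t
    have h := heq t
    simp only [map_add, map_smulₛₗ, RingHom.id_apply]
    subst hγ
    linear_combination (norm := match_scalars <;> field_simp <;> ring) h
end
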